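/- Let α ∈ ℂ*, q ≥ 1, and τ = Λ/(t−α)^q with Λ = ℂ[t,t⁻¹]. For every n with 2 ≤ n ≤ q+1, there exists a ℂ-linear map Φ : τ → ℂ^{n-1} (to row vectors) satisfying Φ(t·y) = α·Φ(y)·J⁻¹ for all y ∈ τ, with first component φ₁ not identically zero, where J is the (n-1)×(n-1) unipotent Jordan block. -/

import Mathlib

/-!
Sending `t` to the matrix `α (1 + N)⁻¹`, with `N` the nilpotent superdiagonal block, defines an
algebra map from `ℂ[t,t⁻¹]` to matrices. Since `(1 + N)⁻¹ - 1 = -N (1 + N)⁻¹` and `N ^ (n - 1) = 0`,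
the image of `(t - α) ^ q` vanishes when `n - 1 ≤ q`, so the map factors through `τ`. Its first
row is the required `Φ`: it sends `1` to `(1, 0, …, 0)`.
-/

open LaurentPolynomial

/-- The m×m nilpotent matrix with 1's on the superdiagonal. -/
def Nmat (m : ℕ) : Matrix (Fin m) (Fin m) ℂ :=
  Matrix.of fun i j => if (i : ℕ) + 1 = (j : ℕ) then 1 else 0

lemma Nmat_pow (m k : ℕ) :
    Nmat m ^ k = Matrix.of fun i j : Fin m => if (i : ℕ) + k = j then (1 : ℂ) else 0 := by
  induction k with
  | zero => ext i j; simp [Matrix.one_apply, Fin.ext_iff]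
  | succ k ih =>
    ext i j
    rw [pow_succ, ih, Matrix.mul_apply]
    simp only [Matrix.of_apply, Nmat, boole_mul]
    by_cases hik : (i : ℕ) + k < m
    · rw [Fintype.sum_eq_single ⟨i + k, hik⟩ fun l hl => if_neg fun h => hl (Fin.ext h.symm),
        if_pos rfl, add_assoc]
    · rw [Finset.sum_eq_zero fun l _ => if_neg (by omega), if_neg (by omega)]

lemma Nmat_pow_self (m : ℕ) : Nmat m ^ m = 0 := by
  ext i j
  rw [Nmat_pow, Matrix.of_apply, if_neg (by omega), Matrix.zero_apply]

lemma Units.inv_sub_one_pow_eq_zero {A : Type*} [Ring A] (u : Aˣ) {N : A} (hu : (u : A) = 1 + N)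
    {k : ℕ} (hN : N ^ k = 0) : ((u⁻¹ : Aˣ) - 1 : A) ^ k = 0 := by
  have hcomm : Commute N (u⁻¹ : Aˣ) :=
    (hu ▸ (Commute.one_right N).add_right (Commute.refl N) : Commute N u).units_inv_right
  have hsub : ((u⁻¹ : Aˣ) - 1 : A) = -(N * (u⁻¹ : Aˣ)) :=
    calc ((u⁻¹ : Aˣ) - 1 : A) = (1 - u) * (u⁻¹ : Aˣ) := by rw [sub_mul, one_mul, Units.mul_inv]
      _ = -(N * (u⁻¹ : Aˣ)) := by rw [hu]; noncomm_ring
  rw [hsub, neg_pow, hcomm.mul_pow, hN, zero_mul, mul_zero]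

section

variable {R A : Type*} [CommRing R] [Ring A] [Algebra R A]

lemma isUnit_of_sub_algebraMap_pow_eq_zero {a : R} (ha : IsUnit a) {x : A} {q : ℕ}
    (h : (x - algebraMap R A a) ^ q = 0) : IsUnit x := by
  simpa using IsNilpotent.isUnit_add_left_of_commute (ha.map (algebraMap R A))
    (Algebra.commute_algebraMap_right a _) (hnil := ⟨q, h⟩)

namespace LaurentPolynomial

noncomputable def liftUnit (u : Aˣ) : R[T;T⁻¹] →ₐ[R] A :=
  AddMonoidAlgebra.lift R A ℤ ((Units.coeHom A).comp (zpowersHom Aˣ u))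

lemma liftUnit_T_one (u : Aˣ) : liftUnit (R := R) u (T 1) = u := by
  rw [liftUnit, T, AddMonoidAlgebra.lift_single]
  simp

noncomputable def liftQuotient {a : R} (ha : IsUnit a) {q : ℕ} {x : A}
    (h : (x - algebraMap R A a) ^ q = 0) :
    (R[T;T⁻¹] ⧸ Ideal.span {(T 1 - C a) ^ q}) →ₐ[R] A :=
  let u := (isUnit_of_sub_algebraMap_pow_eq_zero ha h).unit
  Ideal.Quotient.liftₐ _ (liftUnit u) fun p hp => by
    obtain ⟨c, rfl⟩ := Ideal.mem_span_singleton'.mp hp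
    rw [map_mul, map_pow, map_sub, liftUnit_T_one, C_eq_algebraMap, AlgHom.commutes,
      IsUnit.unit_spec, h, mul_zero]

lemma liftQuotient_mk_T_one {a : R} (ha : IsUnit a) {q : ℕ} {x : A}
    (h : (x - algebraMap R A a) ^ q = 0) :
    liftQuotient ha h (Ideal.Quotient.mk _ (T 1)) = x :=
  liftUnit_T_one _

end LaurentPolynomial

end

theorem stmt6 (n q : ℕ) (hn : 2 ≤ n) (hnq : n ≤ q + 1)
    (α : ℂ) (hα : α ≠ 0) :
    ∃ Φ : (LaurentPolynomial ℂ ⧸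
        Ideal.span {((T 1 - C α) ^ q : LaurentPolynomial ℂ)}) →ₗ[ℂ] (Fin (n - 1) → ℂ),
      (∀ y, Φ (Ideal.Quotient.mk _ (T 1 : LaurentPolynomial ℂ) * y)
          = α • Matrix.vecMul (Φ y) (1 + Nmat (n - 1))⁻¹) ∧
      (∃ y, Φ y ⟨0, by omega⟩ ≠ 0) := by
  set m := n - 1
  have hN : Nmat m ^ q = 0 := pow_eq_zero_of_le (by omega) (Nmat_pow_self m)
  obtain ⟨u, hu⟩ : IsUnit (1 + Nmat m) := IsNilpotent.isUnit_one_add ⟨m, Nmat_pow_self m⟩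
  have hx : (α • (1 + Nmat m)⁻¹ - algebraMap ℂ _ α) ^ q = 0 := by
    rw [Algebra.algebraMap_eq_smul_one, ← smul_sub, smul_pow, ← hu, ← Matrix.coe_units_inv,
      Units.inv_sub_one_pow_eq_zero u hu hN, smul_zero]
  let ψ := liftQuotient (isUnit_iff_ne_zero.mpr hα) hx
  refine ⟨(LinearMap.proj ⟨0, by omega⟩).comp ψ.toLinearMap, fun y => ?_,
    Ideal.Quotient.mk _ 1, ?_⟩
  · change ψ (Ideal.Quotient.mk _ (T 1) * y) _ = _
    rw [mul_comm, map_mul, liftQuotient_mk_T_one, Matrix.mul_apply_eq_vecMul, Matrix.vecMul_smul]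
    rfl
  · change ψ 1 _ _ ≠ 0
    simp
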